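/- Let A, B be bounded operators on a finite-dimensional Hilbert space with ‖A‖, ‖B‖ ≤ M. Then ‖e^{−i(A+B)t} − (e^{−iAt/s} e^{−iBt/s})^s‖ ≤ t² ‖[A,B]‖ / (2s) ≤ 2 t² M² / s for all t ≥ 0 and positive integers s (first-order Trotter error bound). -/

import Mathlib

/-!
With `a = -iA` and `b = -iB` skew-adjoint, every `exp (r • a)` is unitary, so multiplying by
these factors preserves norms. Telescoping `U ^ s - V ^ s` for the unitaries `U = e^{τ(a+b)}`,
`V = e^{τa} e^{τb}`, `τ = t / s`, bounds the error of `s` steps by `s` times that of one step.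
For one step, `u ↦ e^{-u(a+b)} e^{ua} e^{ub}` has derivative `e^{-u(a+b)} [e^{ua}, b] e^{ub}`,
and `‖[e^{ua}, b]‖ ≤ |u| ‖[a, b]‖` because `r ↦ e^{ra} b e^{-ra}` moves at speed `‖[a, b]‖`.
Integrating `u ‖[a, b]‖` over `[0, τ]` gives `τ² ‖[a, b]‖ / 2`.
-/

open NormedSpace

theorem norm_mul_sub_mul_le {R : Type*} [NonUnitalSeminormedRing R] (a b : R) :
    ‖a * b - b * a‖ ≤ 2 * ‖a‖ * ‖b‖ :=
  calc ‖a * b - b * a‖ ≤ ‖a‖ * ‖b‖ + ‖b‖ * ‖a‖ :=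
        (norm_sub_le _ _).trans (add_le_add (norm_mul_le a b) (norm_mul_le b a))
    _ = 2 * ‖a‖ * ‖b‖ := by ring

theorem norm_pow_sub_pow_le_of_mem_unitary {E : Type*} [NormedRing E] [StarRing E] [CStarRing E]
    {u v : E} (hu : u ∈ unitary E) (hv : v ∈ unitary E) (s : ℕ) :
    ‖u ^ s - v ^ s‖ ≤ s * ‖u - v‖ := by
  induction s with
  | zero => simp
  | succ k ih =>
    calc ‖u ^ (k + 1) - v ^ (k + 1)‖ = ‖u ^ k * (u - v) + (u ^ k - v ^ k) * v‖ := by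
          rw [pow_succ, pow_succ]; noncomm_ring
      _ ≤ ‖u - v‖ + ‖u ^ k - v ^ k‖ := by
          grw [norm_add_le, CStarRing.norm_mem_unitary_mul _ (pow_mem hu k),
            CStarRing.norm_mul_mem_unitary _ hv]
      _ ≤ (k + 1 : ℕ) * ‖u - v‖ := by push_cast; linarith

section CStarAlgebra

variable {𝔸 : Type*} [CStarAlgebra 𝔸]

theorem exp_neg_mul_exp (x : 𝔸) : exp (-x) * exp x = 1 := by
  let +nondep : NormedAlgebra ℚ 𝔸 := .restrictScalars ℚ ℂ 𝔸
  rw [← exp_add_of_commute (Commute.refl x).neg_left, neg_add_cancel, exp_zero]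

theorem exp_real_smul_mem_unitary {a : 𝔸} (ha : a ∈ skewAdjoint 𝔸) (r : ℝ) :
    exp (r • a) ∈ unitary 𝔸 := by
  let +nondep : NormedAlgebra ℚ 𝔸 := .restrictScalars ℚ ℂ 𝔸
  refine exp_mem_unitary_of_mem_skewAdjoint ?_
  rw [skewAdjoint.mem_iff, ← Complex.coe_smul, star_smul, skewAdjoint.mem_iff.mp ha,
    Complex.star_def, Complex.conj_ofReal, smul_neg]

theorem norm_exp_smul_mul_sub_mul_exp_smul_le {a : 𝔸} (ha : a ∈ skewAdjoint 𝔸) (b : 𝔸) (u : ℝ) :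
    ‖exp (u • a) * b - b * exp (u • a)‖ ≤ |u| * ‖a * b - b * a‖ := by
  set g : ℝ → 𝔸 := fun r => exp (r • a) * b * exp (r • -a)
  have hg : ∀ r, HasDerivAt g (exp (r • a) * (a * b - b * a) * exp (r • -a)) r := fun r => by
    refine (((hasDerivAt_exp_smul_const a r).mul_const b).mul
      (hasDerivAt_exp_smul_const' (-a) r)).congr_deriv ?_
    noncomm_ring
  have hg' : ∀ r, ‖exp (r • a) * (a * b - b * a) * exp (r • -a)‖ = ‖a * b - b * a‖ := fun r => by
    rw [CStarRing.norm_mul_mem_unitary _ (exp_real_smul_mem_unitary (neg_mem ha) r),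
      CStarRing.norm_mem_unitary_mul _ (exp_real_smul_mem_unitary ha r)]
  have hmvt : ‖g u - g 0‖ ≤ ‖a * b - b * a‖ * ‖u - 0‖ :=
    convex_univ.norm_image_sub_le_of_norm_hasDerivWithin_le (fun r _ => (hg r).hasDerivWithinAt)
      (fun r _ => (hg' r).le) trivial trivial
  have hconj : exp (u • a) * b - b * exp (u • a) = (g u - g 0) * exp (u • a) := by
    simp only [g, zero_smul, neg_zero, exp_zero, one_mul, mul_one, sub_mul, mul_assoc, smul_neg,
      exp_neg_mul_exp]
  rw [hconj, CStarRing.norm_mul_mem_unitary _ (exp_real_smul_mem_unitary ha u), mul_comm]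
  simpa using hmvt

theorem norm_exp_smul_mul_exp_smul_sub_exp_smul_add_le_of_nonneg {a b : 𝔸}
    (ha : a ∈ skewAdjoint 𝔸) (hb : b ∈ skewAdjoint 𝔸) {τ : ℝ} (hτ : 0 ≤ τ) :
    ‖exp (τ • a) * exp (τ • b) - exp (τ • (a + b))‖ ≤ τ ^ 2 / 2 * ‖a * b - b * a‖ := by
  set K := ‖a * b - b * a‖
  have hab : -(a + b) ∈ skewAdjoint 𝔸 := neg_mem (add_mem ha hb)
  set h : ℝ → 𝔸 := fun u => exp (u • -(a + b)) * (exp (u • a) * exp (u • b)) - 1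
  set h' : ℝ → 𝔸 := fun u =>
    exp (u • -(a + b)) * ((exp (u • a) * b - b * exp (u • a)) * exp (u • b))
  have hh : ∀ u, HasDerivAt h (h' u) u := fun u => by
    refine (((hasDerivAt_exp_smul_const (-(a + b)) u).mul
      ((hasDerivAt_exp_smul_const' a u).mul (hasDerivAt_exp_smul_const' b u))).sub_const
        1).congr_deriv ?_
    simp only [h', Pi.mul_apply]
    noncomm_ring
  have hh' : ∀ u ∈ Set.Ico 0 τ, ‖h' u‖ ≤ K * u := fun u hu => by
    rw [CStarRing.norm_mem_unitary_mul _ (exp_real_smul_mem_unitary hab u),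
      CStarRing.norm_mul_mem_unitary _ (exp_real_smul_mem_unitary hb u), mul_comm]
    simpa [abs_of_nonneg hu.1] using norm_exp_smul_mul_sub_mul_exp_smul_le ha b u
  have hquad : ∀ x, HasDerivAt (fun x => K / 2 * x ^ 2) (K * x) x := fun x => by
    refine ((hasDerivAt_pow 2 x).const_mul (K / 2)).congr_deriv ?_
    norm_num
    ring
  have hhτ : ‖h τ‖ ≤ K / 2 * τ ^ 2 :=
    image_norm_le_of_norm_deriv_right_le_deriv_boundary
      (fun x _ => (hh x).continuousAt.continuousWithinAt) (fun x _ => (hh x).hasDerivWithinAt)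
      (by simp [h]) hquad hh' (Set.right_mem_Icc.2 hτ)
  have hconj : exp (τ • -(a + b)) * (exp (τ • a) * exp (τ • b) - exp (τ • (a + b))) = h τ := by
    simp only [h, mul_sub, smul_neg, exp_neg_mul_exp]
  rw [← CStarRing.norm_mem_unitary_mul _ (exp_real_smul_mem_unitary hab τ), hconj]
  linarith

theorem norm_exp_smul_mul_exp_smul_sub_exp_smul_add_le {a b : 𝔸}
    (ha : a ∈ skewAdjoint 𝔸) (hb : b ∈ skewAdjoint 𝔸) (τ : ℝ) :
    ‖exp (τ • a) * exp (τ • b) - exp (τ • (a + b))‖ ≤ τ ^ 2 / 2 * ‖a * b - b * a‖ := by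
  rcases le_total 0 τ with hτ | hτ
  · exact norm_exp_smul_mul_exp_smul_sub_exp_smul_add_le_of_nonneg ha hb hτ
  · simpa [neg_add] using
      norm_exp_smul_mul_exp_smul_sub_exp_smul_add_le_of_nonneg (neg_mem ha) (neg_mem hb)
        (neg_nonneg.2 hτ)

theorem norm_exp_smul_add_sub_pow_le {a b : 𝔸} (ha : a ∈ skewAdjoint 𝔸)
    (hb : b ∈ skewAdjoint 𝔸) (t : ℝ) {s : ℕ} (hs : s ≠ 0) :
    ‖exp (t • (a + b)) - (exp ((t / s) • a) * exp ((t / s) • b)) ^ s‖ ≤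
      t ^ 2 * ‖a * b - b * a‖ / (2 * s) := by
  let +nondep : NormedAlgebra ℚ 𝔸 := .restrictScalars ℚ ℂ 𝔸
  have hs' : (s : ℝ) ≠ 0 := Nat.cast_ne_zero.2 hs
  have hexp : exp (t • (a + b)) = exp ((t / s) • (a + b)) ^ s := by
    rw [← exp_nsmul, ← Nat.cast_smul_eq_nsmul ℝ, smul_smul, mul_div_cancel₀ _ hs']
  calc _ ≤ s * ‖exp ((t / s) • (a + b)) - exp ((t / s) • a) * exp ((t / s) • b)‖ := by
        rw [hexp]
        exact norm_pow_sub_pow_le_of_mem_unitary (exp_real_smul_mem_unitary (add_mem ha hb) _)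
          (mul_mem (exp_real_smul_mem_unitary ha _) (exp_real_smul_mem_unitary hb _)) s
    _ ≤ s * ((t / s) ^ 2 / 2 * ‖a * b - b * a‖) := by
        rw [norm_sub_rev]
        gcongr
        exact norm_exp_smul_mul_exp_smul_sub_exp_smul_add_le ha hb _
    _ = t ^ 2 * ‖a * b - b * a‖ / (2 * s) := by field_simp

theorem norm_exp_neg_I_smul_add_sub_pow_le {A B : 𝔸} (hA : IsSelfAdjoint A)
    (hB : IsSelfAdjoint B) (t : ℝ) {s : ℕ} (hs : s ≠ 0) :
    ‖exp ((-Complex.I * t) • (A + B)) -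
        (exp ((-Complex.I * (t / s)) • A) * exp ((-Complex.I * (t / s)) • B)) ^ s‖ ≤
      t ^ 2 * ‖A * B - B * A‖ / (2 * s) := by
  have hI : -Complex.I ∈ skewAdjoint ℂ := by simp [skewAdjoint.mem_iff]
  have hsmul : ∀ (r : ℝ) (X : 𝔸), (-Complex.I * r) • X = r • -Complex.I • X := fun r X => by
    rw [mul_comm, mul_smul, Complex.coe_smul]
  have hcomm : ‖(-Complex.I • A) * (-Complex.I • B) - (-Complex.I • B) * (-Complex.I • A)‖ =
      ‖A * B - B * A‖ := by
    rw [smul_mul_smul, smul_mul_smul, ← smul_sub, norm_smul]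
    simp
  have := norm_exp_smul_add_sub_pow_le (hA.smul_mem_skewAdjoint hI)
    (hB.smul_mem_skewAdjoint hI) t hs
  rwa [← smul_add, hcomm, ← hsmul, ← hsmul, ← hsmul, Complex.ofReal_div,
    Complex.ofReal_natCast] at this

end CStarAlgebra

theorem trotter_error_bound_general
    (n : ℕ) (M : ℝ)
    (A B : EuclideanSpace ℂ (Fin n) →L[ℂ] EuclideanSpace ℂ (Fin n))
    (hA : IsSelfAdjoint A) (hB : IsSelfAdjoint B)
    (hAn : ‖A‖ ≤ M) (hBn : ‖B‖ ≤ M)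
    (t : ℝ) (s : ℕ) (hs : 0 < s) :
    ‖exp ((-Complex.I * (t:ℂ)) • (A + B)) -
        (exp ((-Complex.I * ((t:ℂ) / (s:ℂ))) • A) *
          exp ((-Complex.I * ((t:ℂ) / (s:ℂ))) • B)) ^ s‖ ≤
      t ^ 2 * ‖A * B - B * A‖ / (2 * s) ∧
    t ^ 2 * ‖A * B - B * A‖ / (2 * s) ≤ 2 * t ^ 2 * M ^ 2 / s := by
  refine ⟨norm_exp_neg_I_smul_add_sub_pow_le hA hB t hs.ne', ?_⟩
  have hM : 0 ≤ M := (norm_nonneg A).trans hAn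
  grw [norm_mul_sub_mul_le, hAn, hBn]
  field_simp
  nlinarith [mul_nonneg (sq_nonneg t) (sq_nonneg M)]

/-- First-order Trotter error bound: for self-adjoint `A, B` with
`‖A‖, ‖B‖ ≤ M`,
`‖e^{−i(A+B)t} − (e^{−iAt/s} e^{−iBt/s})^s‖ ≤ t²‖[A,B]‖/(2s) ≤ 2t²M²/s`. -/
theorem trotter_error_bound
    (n : ℕ) (M : ℝ)
    (A B : EuclideanSpace ℂ (Fin n) →L[ℂ] EuclideanSpace ℂ (Fin n))
    (hA : IsSelfAdjoint A) (hB : IsSelfAdjoint B)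
    (hAn : ‖A‖ ≤ M) (hBn : ‖B‖ ≤ M)
    (t : ℝ) (ht : 0 ≤ t) (s : ℕ) (hs : 0 < s) :
    ‖exp ((-Complex.I * (t:ℂ)) • (A + B)) -
        (exp ((-Complex.I * ((t:ℂ) / (s:ℂ))) • A) *
          exp ((-Complex.I * ((t:ℂ) / (s:ℂ))) • B)) ^ s‖ ≤
      t ^ 2 * ‖A * B - B * A‖ / (2 * s) ∧
    t ^ 2 * ‖A * B - B * A‖ / (2 * s) ≤ 2 * t ^ 2 * M ^ 2 / s :=
  trotter_error_bound_general n M A B hA hB hAn hBn t s hs
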